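/- Let σ ∈ M_n(ℂ) be positive definite with trace 1. For any density matrices ρ₁, ρ₂ (positive semidefinite, trace 1), ‖ρ₁ - ρ₂‖₁ ≤ ‖σ^{1/4}(σ^{-1/4}√ρ₁ σ^{-1/4} - σ^{-1/4}√ρ₂ σ^{-1/4})σ^{1/4}‖₂ · ‖√ρ₁ + √ρ₂‖₂, where ‖·‖₁ and ‖·‖₂ are the trace norm and Hilbert–Schmidt norm. -/

import Mathlib

open Matrix
open scoped ComplexOrder

/-- Real powers of a Hermitian matrix, via its spectral decomposition. -/
noncomputable def mpow {n : ℕ} {σ : Matrix (Fin n) (Fin n) ℂ} (hσ : σ.IsHermitian)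
    (t : ℝ) : Matrix (Fin n) (Fin n) ℂ :=
  (hσ.eigenvectorUnitary : Matrix (Fin n) (Fin n) ℂ) *
    Matrix.diagonal (fun i => ((hσ.eigenvalues i ^ t : ℝ) : ℂ)) *
    (star hσ.eigenvectorUnitary : Matrix (Fin n) (Fin n) ℂ)

/-- The positive semidefinite square root of a positive semidefinite matrix
(the definition `Matrix.PosSemidef.sqrt` of the older Mathlib, since removed). -/
noncomputable def Matrix.PosSemidef.sqrt {n 𝕜 : Type*} [Fintype n] [RCLike 𝕜] [DecidableEq n]
    {A : Matrix n n 𝕜} (hA : A.PosSemidef) : Matrix n n 𝕜 :=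
  hA.1.eigenvectorUnitary.1 * diagonal ((↑) ∘ (·.sqrt) ∘ hA.1.eigenvalues) *
    (star hA.1.eigenvectorUnitary : Matrix n n 𝕜)

/-- The trace (Schatten-1) norm `‖A‖₁ = Tr √(A* A)`. -/
noncomputable def traceNorm {n : ℕ} (A : Matrix (Fin n) (Fin n) ℂ) : ℝ :=
  ((Matrix.posSemidef_conjTranspose_mul_self A).sqrt.trace).re

/-- The Hilbert–Schmidt (Schatten-2) norm `‖A‖₂ = √(Tr (A* A))`. -/
noncomputable def hsNorm {n : ℕ} (A : Matrix (Fin n) (Fin n) ℂ) : ℝ :=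
  Real.sqrt ((Aᴴ * A).trace.re)

/-
Put `X = √ρ₁ - √ρ₂` and `Y = √ρ₁ + √ρ₂`. The powers `σ^{±1/4}` cancel, so the first factor is
`‖X‖₂`, and `XY + YX = 2 (ρ₁ - ρ₂)`. In an orthonormal eigenbasis of the Hermitian matrix
`ρ₁ - ρ₂` its trace norm is the sum of the moduli of the diagonal entries, so twice it is at most
`∑ᵢ |(XY)ᵢᵢ| + ∑ᵢ |(YX)ᵢᵢ|`. Finally `∑ᵢ |(PQ)ᵢᵢ| ≤ ‖P‖₂ ‖Q‖₂` by Cauchy–Schwarz (Hölder for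
Schatten norms), and the Hilbert–Schmidt norm is unitarily invariant.
-/

namespace Matrix

variable {ι 𝕜 : Type*} [Fintype ι] [DecidableEq ι] [RCLike 𝕜]

lemma IsHermitian.trace_cfc {A : Matrix ι ι 𝕜} (hA : A.IsHermitian) (f : ℝ → ℝ) :
    (cfc f A).trace = ∑ i, (f (hA.eigenvalues i) : 𝕜) := by
  rw [hA.cfc_eq, IsHermitian.cfc, Unitary.conjStarAlgAut_apply, trace_mul_cycle,
    Unitary.coe_star_mul_self, one_mul, trace_diagonal]
  rfl

lemma PosSemidef.sqrt_eq_cfc {A : Matrix ι ι 𝕜} (hA : A.PosSemidef) :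
    hA.sqrt = cfc Real.sqrt A := by
  rw [hA.1.cfc_eq, IsHermitian.cfc, Unitary.conjStarAlgAut_apply]
  rfl

lemma PosSemidef.nonneg_of_mem_spectrum {A : Matrix ι ι 𝕜} (hA : A.PosSemidef) {x : ℝ}
    (hx : x ∈ spectrum ℝ A) : 0 ≤ x := by
  obtain ⟨i, rfl⟩ := hA.1.spectrum_real_eq_range_eigenvalues ▸ hx
  exact hA.eigenvalues_nonneg i

lemma PosDef.pos_of_mem_spectrum {A : Matrix ι ι 𝕜} (hA : A.PosDef) {x : ℝ}
    (hx : x ∈ spectrum ℝ A) : 0 < x := by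
  obtain ⟨i, rfl⟩ := hA.1.spectrum_real_eq_range_eigenvalues ▸ hx
  exact hA.eigenvalues_pos i

lemma PosSemidef.sqrt_mul_sqrt {A : Matrix ι ι 𝕜} (hA : A.PosSemidef) :
    hA.sqrt * hA.sqrt = A := by
  rw [hA.sqrt_eq_cfc, ← cfc_mul Real.sqrt Real.sqrt A]
  conv_rhs => rw [← cfc_id' ℝ A hA.1.isSelfAdjoint]
  exact cfc_congr fun x hx => Real.mul_self_sqrt (hA.nonneg_of_mem_spectrum hx)

lemma IsHermitian.sqrt_conjTranspose_mul_self {A : Matrix ι ι 𝕜} (hA : A.IsHermitian) :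
    (posSemidef_conjTranspose_mul_self A).sqrt = cfc (fun x : ℝ => |x|) A := by
  rw [PosSemidef.sqrt_eq_cfc, hA.eq, ← sq,
    ← cfc_comp_pow Real.sqrt 2 A (ha := hA.isSelfAdjoint)]
  exact cfc_congr fun x _ => Real.sqrt_sq_eq_abs x

end Matrix

open Matrix

lemma mpow_eq_cfc {n : ℕ} {σ : Matrix (Fin n) (Fin n) ℂ} (hσ : σ.IsHermitian) (t : ℝ) :
    mpow hσ t = cfc (fun x : ℝ => x ^ t) σ := by
  rw [hσ.cfc_eq, IsHermitian.cfc, Unitary.conjStarAlgAut_apply]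
  rfl

lemma mpow_mul_mpow_neg {n : ℕ} {σ : Matrix (Fin n) (Fin n) ℂ} (hσ : σ.PosDef) (t : ℝ) :
    mpow hσ.1 t * mpow hσ.1 (-t) = 1 := by
  rw [mpow_eq_cfc, mpow_eq_cfc, ← cfc_mul _ _ σ (finite_real_spectrum.continuousOn _)
    (finite_real_spectrum.continuousOn _), ← cfc_const_one ℝ σ hσ.1.isSelfAdjoint]
  refine cfc_congr fun x hx => ?_
  rw [← Real.rpow_add (hσ.pos_of_mem_spectrum hx), add_neg_cancel, Real.rpow_zero]

lemma mpow_mul_mpow_neg_mul_mpow_neg_mul_mpow {n : ℕ} {σ : Matrix (Fin n) (Fin n) ℂ}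
    (hσ : σ.PosDef) (t : ℝ) (M : Matrix (Fin n) (Fin n) ℂ) :
    mpow hσ.1 t * (mpow hσ.1 (-t) * M * mpow hσ.1 (-t)) * mpow hσ.1 t = M := by
  have h := mpow_mul_mpow_neg hσ (-t)
  rw [neg_neg] at h
  simp only [Matrix.mul_assoc, h, Matrix.mul_one]
  rw [← Matrix.mul_assoc, mpow_mul_mpow_neg hσ, Matrix.one_mul]

lemma traceNorm_eq_sum_abs_eigenvalues {n : ℕ} {D : Matrix (Fin n) (Fin n) ℂ}
    (hD : D.IsHermitian) : traceNorm D = ∑ i, |hD.eigenvalues i| := by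
  rw [traceNorm, hD.sqrt_conjTranspose_mul_self, hD.trace_cfc, Complex.re_sum]
  rfl

lemma hsNorm_eq_sqrt_sum_sq_norm {n : ℕ} (A : Matrix (Fin n) (Fin n) ℂ) :
    hsNorm A = √(∑ i, ∑ j, ‖A i j‖ ^ 2) := by
  rw [hsNorm, trace, Complex.re_sum, Finset.sum_comm]
  congr 1
  refine Finset.sum_congr rfl fun i _ => ?_
  simp [mul_apply, Complex.re_sum, ← Complex.normSq_eq_conj_mul_self, Complex.sq_norm]

lemma hsNorm_unitary_mul {n : ℕ} {U : Matrix (Fin n) (Fin n) ℂ}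
    (hU : U ∈ unitaryGroup (Fin n) ℂ) (X : Matrix (Fin n) (Fin n) ℂ) :
    hsNorm (U * X) = hsNorm X := by
  have hUU : Uᴴ * U = 1 := Unitary.star_mul_self_of_mem hU
  rw [hsNorm, hsNorm, conjTranspose_mul, Matrix.mul_assoc, ← Matrix.mul_assoc Uᴴ, hUU,
    Matrix.one_mul]

lemma hsNorm_mul_unitary {n : ℕ} {U : Matrix (Fin n) (Fin n) ℂ}
    (hU : U ∈ unitaryGroup (Fin n) ℂ) (X : Matrix (Fin n) (Fin n) ℂ) :
    hsNorm (X * U) = hsNorm X := by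
  have hUU : U * Uᴴ = 1 := Unitary.mul_star_self_of_mem hU
  rw [hsNorm, hsNorm, conjTranspose_mul, Matrix.mul_assoc, trace_mul_comm, Matrix.mul_assoc,
    Matrix.mul_assoc, hUU, Matrix.mul_one]

lemma sum_norm_diag_mul_le_hsNorm_mul_hsNorm {n : ℕ} (P Q : Matrix (Fin n) (Fin n) ℂ) :
    ∑ i, ‖(P * Q) i i‖ ≤ hsNorm P * hsNorm Q := by
  calc ∑ i, ‖(P * Q) i i‖ ≤ ∑ i, ∑ k, ‖P i k‖ * ‖Q k i‖ := by
        gcongr with i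
        rw [mul_apply]
        exact norm_sum_le_of_le _ fun k _ => (norm_mul _ _).le
    _ ≤ √(∑ i, ∑ k, ‖P i k‖ ^ 2) * √(∑ i, ∑ k, ‖Q k i‖ ^ 2) := by
        simpa only [← Finset.sum_product'] using
          Real.sum_mul_le_sqrt_mul_sqrt (Finset.univ ×ˢ Finset.univ) (fun p => ‖P p.1 p.2‖)
            (fun p => ‖Q p.2 p.1‖)
    _ = hsNorm P * hsNorm Q := by
        rw [hsNorm_eq_sqrt_sum_sq_norm, hsNorm_eq_sqrt_sum_sq_norm]
        congr 2
        exact Finset.sum_comm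

lemma traceNorm_le_hsNorm_mul_hsNorm_of_mul_add_mul_eq {n : ℕ}
    {D X Y : Matrix (Fin n) (Fin n) ℂ} (hD : D.IsHermitian) (hXY : X * Y + Y * X = 2 • D) :
    traceNorm D ≤ hsNorm X * hsNorm Y := by
  set U := (hD.eigenvectorUnitary : Matrix (Fin n) (Fin n) ℂ)
  have hU : U ∈ unitaryGroup (Fin n) ℂ := hD.eigenvectorUnitary.2
  have hU' : star U ∈ unitaryGroup (Fin n) ℂ := Unitary.star_mem hU
  have hdiag : star U * D * U = diagonal (Complex.ofReal ∘ hD.eigenvalues) := by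
    have h := hD.conjStarAlgAut_star_eigenvectorUnitary
    rwa [Unitary.conjStarAlgAut_star_apply] at h
  suffices 2 * traceNorm D ≤ 2 * (hsNorm X * hsNorm Y) by linarith
  calc 2 * traceNorm D = ∑ i, ‖(star U * (X * Y + Y * X) * U) i i‖ := by
        rw [hXY, Matrix.mul_smul, Matrix.smul_mul, hdiag, traceNorm_eq_sum_abs_eigenvalues hD,
          Finset.mul_sum]
        refine Finset.sum_congr rfl fun i _ => ?_
        simp [diagonal_apply_eq]
    _ ≤ ∑ i, ‖(star U * X * (Y * U)) i i‖ + ∑ i, ‖(star U * Y * (X * U)) i i‖ := by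
        rw [← Finset.sum_add_distrib]
        gcongr with i
        simp only [Matrix.mul_add, Matrix.add_mul, Matrix.add_apply, Matrix.mul_assoc]
        exact norm_add_le _ _
    _ ≤ hsNorm (star U * X) * hsNorm (Y * U) + hsNorm (star U * Y) * hsNorm (X * U) :=
        add_le_add (sum_norm_diag_mul_le_hsNorm_mul_hsNorm _ _)
          (sum_norm_diag_mul_le_hsNorm_mul_hsNorm _ _)
    _ = 2 * (hsNorm X * hsNorm Y) := by
        rw [hsNorm_unitary_mul hU', hsNorm_unitary_mul hU', hsNorm_mul_unitary hU,
          hsNorm_mul_unitary hU]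
        ring

theorem traceNorm_sub_le_hsNorm_mul_hsNorm_general {n : ℕ} (σ ρ₁ ρ₂ : Matrix (Fin n) (Fin n) ℂ)
    (hσ : σ.PosDef)
    (hρ₁ : ρ₁.PosSemidef)
    (hρ₂ : ρ₂.PosSemidef) :
    traceNorm (ρ₁ - ρ₂) ≤
      hsNorm (mpow hσ.1 (1/4 : ℝ) *
          (mpow hσ.1 (-(1/4) : ℝ) * hρ₁.sqrt * mpow hσ.1 (-(1/4) : ℝ)
            - mpow hσ.1 (-(1/4) : ℝ) * hρ₂.sqrt * mpow hσ.1 (-(1/4) : ℝ)) *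
          mpow hσ.1 (1/4 : ℝ)) *
        hsNorm (hρ₁.sqrt + hρ₂.sqrt) := by
  rw [Matrix.mul_sub, Matrix.sub_mul, mpow_mul_mpow_neg_mul_mpow_neg_mul_mpow hσ,
    mpow_mul_mpow_neg_mul_mpow_neg_mul_mpow hσ]
  refine traceNorm_le_hsNorm_mul_hsNorm_of_mul_add_mul_eq (hρ₁.1.sub hρ₂.1) ?_
  conv_rhs => rw [← hρ₁.sqrt_mul_sqrt, ← hρ₂.sqrt_mul_sqrt]
  noncomm_ring

/-- For a full-rank density matrix `σ` and density matrices `ρ₁, ρ₂`,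
`‖ρ₁ - ρ₂‖₁ ≤ ‖σ^{1/4}(σ^{-1/4}√ρ₁σ^{-1/4} - σ^{-1/4}√ρ₂σ^{-1/4})σ^{1/4}‖₂ ⬝ ‖√ρ₁ + √ρ₂‖₂`. -/
theorem traceNorm_sub_le_hsNorm_mul_hsNorm {n : ℕ} (σ ρ₁ ρ₂ : Matrix (Fin n) (Fin n) ℂ)
    (hσ : σ.PosDef) (hσtr : σ.trace = 1)
    (hρ₁ : ρ₁.PosSemidef) (hρ₁tr : ρ₁.trace = 1)
    (hρ₂ : ρ₂.PosSemidef) (hρ₂tr : ρ₂.trace = 1) :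
    traceNorm (ρ₁ - ρ₂) ≤
      hsNorm (mpow hσ.1 (1/4 : ℝ) *
          (mpow hσ.1 (-(1/4) : ℝ) * hρ₁.sqrt * mpow hσ.1 (-(1/4) : ℝ)
            - mpow hσ.1 (-(1/4) : ℝ) * hρ₂.sqrt * mpow hσ.1 (-(1/4) : ℝ)) *
          mpow hσ.1 (1/4 : ℝ)) *
        hsNorm (hρ₁.sqrt + hρ₂.sqrt) :=
  traceNorm_sub_le_hsNorm_mul_hsNorm_general σ ρ₁ ρ₂ hσ hρ₁ hρ₂
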